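/- Let N ≥ 2, let Ω ⊂ ℝ^N be a bounded open set, let H : Ω × ℝ^N → ℝ be continuous and satisfy (SC1) with constant b, and let f : Ω → ℝ be continuous and bounded. Suppose u : cl(Ω) → ℝ is a bounded upper semicontinuous viscosity subsolution of 𝒫⁻₁(D²u) + H(x,∇u) = f(x) in Ω with u = 0 on ∂Ω, and suppose there is a constant C₀ > 0 such that −u(x) ≤ C₀ d(x) for all x ∈ cl(Ω). Then u is Lipschitz continuous on cl(Ω), with Lipschitz constant bounded by a constant depending only on b, C₀, sup|u| and sup|f|. -/

import Mathlib

/-!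
Fix `y ∈ cl Ω` and compare `u` with `u y + φ`, where `φ z = g ‖z - y‖`,
`g s = (A / c) (1 - e^{-c s})` and `c = b + 1`. In the radial direction the Hessian of `φ` is
`g'' = -c g'`, while `‖∇φ‖ ≤ g'`; hence `𝒫⁻₁(D²φ) + H(z, ∇φ) ≤ -g' ≤ -A e^{-c diam Ω}`, which lies
below `-sup |f|` once `A` is large, so `u - φ` has no maximum in `Ω \ {y}`. On `∂Ω` we have `u = 0`
and, by concavity of `g`, `φ z ≥ A e^{-c diam Ω} ‖z - y‖ ≥ C₀ d(y) ≥ -u y`. So `u - φ ≤ u y` on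
`cl Ω`, and `g s ≤ A s` gives `u x - u y ≤ A ‖x - y‖`.
-/

open Metric Filter Topology Set

/-- `𝒫⁻ₖ(D²φ(x))`: the sum of the `k` smallest eigenvalues of the Hessian of `φ` at `x`,
expressed through the min-max representation over orthonormal `k`-frames. -/
noncomputable def Pminus {N : ℕ} (k : ℕ) (φ : EuclideanSpace ℝ (Fin N) → ℝ)
    (x : EuclideanSpace ℝ (Fin N)) : ℝ :=
  sInf {s : ℝ | ∃ ξ : Fin k → EuclideanSpace ℝ (Fin N), Orthonormal ℝ ξ ∧
    s = ∑ i, iteratedFDeriv ℝ 2 φ x ![ξ i, ξ i]}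

/-- `𝒫⁺ₖ(D²φ(x))`: the sum of the `k` largest eigenvalues of the Hessian of `φ` at `x`. -/
noncomputable def Pplus {N : ℕ} (k : ℕ) (φ : EuclideanSpace ℝ (Fin N) → ℝ)
    (x : EuclideanSpace ℝ (Fin N)) : ℝ :=
  sSup {s : ℝ | ∃ ξ : Fin k → EuclideanSpace ℝ (Fin N), Orthonormal ℝ ξ ∧
    s = ∑ i, iteratedFDeriv ℝ 2 φ x ![ξ i, ξ i]}

/-- Viscosity subsolution of `P(D²u) + H(x,∇u) + μ u = f(x)` in `Ω`:
for every `x₀ ∈ Ω` and every `C²` test function `φ` such that `u - φ` has a local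
maximum (relative to `Ω`) at `x₀`, one has `P(D²φ(x₀)) + H(x₀,∇φ(x₀)) + μ u(x₀) ≥ f(x₀)`. -/
def IsViscSubsol {N : ℕ}
    (P : (EuclideanSpace ℝ (Fin N) → ℝ) → EuclideanSpace ℝ (Fin N) → ℝ)
    (Ω : Set (EuclideanSpace ℝ (Fin N)))
    (H : EuclideanSpace ℝ (Fin N) → EuclideanSpace ℝ (Fin N) → ℝ)
    (μ : ℝ) (f : EuclideanSpace ℝ (Fin N) → ℝ)
    (u : EuclideanSpace ℝ (Fin N) → ℝ) : Prop :=
  ∀ x₀ ∈ Ω, ∀ φ : EuclideanSpace ℝ (Fin N) → ℝ, ContDiffAt ℝ 2 φ x₀ →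
    IsLocalMaxOn (fun x => u x - φ x) Ω x₀ →
    f x₀ ≤ P φ x₀ + H x₀ (gradient φ x₀) + μ * u x₀

/-- Viscosity supersolution of `P(D²u) + H(x,∇u) + μ u = f(x)` in `Ω`. -/
def IsViscSupersol {N : ℕ}
    (P : (EuclideanSpace ℝ (Fin N) → ℝ) → EuclideanSpace ℝ (Fin N) → ℝ)
    (Ω : Set (EuclideanSpace ℝ (Fin N)))
    (H : EuclideanSpace ℝ (Fin N) → EuclideanSpace ℝ (Fin N) → ℝ)
    (μ : ℝ) (f : EuclideanSpace ℝ (Fin N) → ℝ)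
    (u : EuclideanSpace ℝ (Fin N) → ℝ) : Prop :=
  ∀ x₀ ∈ Ω, ∀ φ : EuclideanSpace ℝ (Fin N) → ℝ, ContDiffAt ℝ 2 φ x₀ →
    IsLocalMinOn (fun x => u x - φ x) Ω x₀ →
    P φ x₀ + H x₀ (gradient φ x₀) + μ * u x₀ ≤ f x₀

/-- Structure condition (SC1): `|H(x,ξ)| ≤ b‖ξ‖`. -/
def SC1 {N : ℕ} (Ω : Set (EuclideanSpace ℝ (Fin N)))
    (H : EuclideanSpace ℝ (Fin N) → EuclideanSpace ℝ (Fin N) → ℝ) (b : ℝ) : Prop :=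
  ∀ x ∈ Ω, ∀ ξ : EuclideanSpace ℝ (Fin N), |H x ξ| ≤ b * ‖ξ‖

/-- Structure condition (SC2): positive 1-homogeneity in the gradient variable. -/
def SC2 {N : ℕ} (Ω : Set (EuclideanSpace ℝ (Fin N)))
    (H : EuclideanSpace ℝ (Fin N) → EuclideanSpace ℝ (Fin N) → ℝ) : Prop :=
  ∀ x ∈ Ω, ∀ t : ℝ, 0 ≤ t → ∀ ξ : EuclideanSpace ℝ (Fin N), H x (t • ξ) = t * H x ξ

/-- Structure condition (SC3): uniform continuity in `x` through a modulus of continuity. -/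
def SC3 {N : ℕ} (Ω : Set (EuclideanSpace ℝ (Fin N)))
    (H : EuclideanSpace ℝ (Fin N) → EuclideanSpace ℝ (Fin N) → ℝ) : Prop :=
  ∃ ω : ℝ → ℝ, Monotone ω ∧ Filter.Tendsto ω (𝓝[>] (0 : ℝ)) (𝓝 (0 : ℝ)) ∧
    ∀ x ∈ Ω, ∀ y ∈ Ω, ∀ ξ : EuclideanSpace ℝ (Fin N),
      |H x ξ - H y ξ| ≤ ω (‖x - y‖ * (1 + ‖ξ‖))

/-- `Ω ∈ 𝒞_R`: a "hula hoop" domain, i.e. an intersection of a nonempty family of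
open balls of the common radius `R`. -/
def HulaHoop {N : ℕ} (R : ℝ) (Ω : Set (EuclideanSpace ℝ (Fin N))) : Prop :=
  ∃ Y : Set (EuclideanSpace ℝ (Fin N)), Y.Nonempty ∧ Ω = ⋂ y ∈ Y, ball y R

/-- `μ̄ₖ⁻(Ω)`: the supremum (in `EReal`) of those `μ` for which there is an upper
semicontinuous `w < 0` on `cl(Ω)` which is a viscosity subsolution of
`𝒫⁻ₖ(D²w) + H(x,∇w) + μ w = 0` in `Ω`. -/
noncomputable def muBarMinus {N : ℕ} (k : ℕ) (Ω : Set (EuclideanSpace ℝ (Fin N)))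
    (H : EuclideanSpace ℝ (Fin N) → EuclideanSpace ℝ (Fin N) → ℝ) : EReal :=
  sSup {m : EReal | ∃ μ : ℝ, m = (μ : EReal) ∧ ∃ w : EuclideanSpace ℝ (Fin N) → ℝ,
    UpperSemicontinuousOn w (closure Ω) ∧ (∀ x ∈ closure Ω, w x < 0) ∧
    IsViscSubsol (Pminus k) Ω H μ (fun _ => 0) w}

/-- `μₖ⁻(Ω)`: as `μ̄ₖ⁻(Ω)`, but only requiring `w < 0` (and upper semicontinuous) in `Ω`. -/
noncomputable def muMinus {N : ℕ} (k : ℕ) (Ω : Set (EuclideanSpace ℝ (Fin N)))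
    (H : EuclideanSpace ℝ (Fin N) → EuclideanSpace ℝ (Fin N) → ℝ) : EReal :=
  sSup {m : EReal | ∃ μ : ℝ, m = (μ : EReal) ∧ ∃ w : EuclideanSpace ℝ (Fin N) → ℝ,
    UpperSemicontinuousOn w Ω ∧ (∀ x ∈ Ω, w x < 0) ∧
    IsViscSubsol (Pminus k) Ω H μ (fun _ => 0) w}

/-- `μ̄ₖ⁺(Ω)`: the supremum (in `EReal`) of those `μ` for which there is a lower
semicontinuous `w > 0` on `cl(Ω)` which is a viscosity supersolution of
`𝒫⁻ₖ(D²w) + H(x,∇w) + μ w = 0` in `Ω`. -/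
noncomputable def muBarPlus {N : ℕ} (k : ℕ) (Ω : Set (EuclideanSpace ℝ (Fin N)))
    (H : EuclideanSpace ℝ (Fin N) → EuclideanSpace ℝ (Fin N) → ℝ) : EReal :=
  sSup {m : EReal | ∃ μ : ℝ, m = (μ : EReal) ∧ ∃ w : EuclideanSpace ℝ (Fin N) → ℝ,
    LowerSemicontinuousOn w (closure Ω) ∧ (∀ x ∈ closure Ω, 0 < w x) ∧
    IsViscSupersol (Pminus k) Ω H μ (fun _ => 0) w}

/-- `μₖ⁺(Ω)`: as `μ̄ₖ⁺(Ω)`, but only requiring `w > 0` (and lower semicontinuous) in `Ω`. -/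
noncomputable def muPlus {N : ℕ} (k : ℕ) (Ω : Set (EuclideanSpace ℝ (Fin N)))
    (H : EuclideanSpace ℝ (Fin N) → EuclideanSpace ℝ (Fin N) → ℝ) : EReal :=
  sSup {m : EReal | ∃ μ : ℝ, m = (μ : EReal) ∧ ∃ w : EuclideanSpace ℝ (Fin N) → ℝ,
    LowerSemicontinuousOn w Ω ∧ (∀ x ∈ Ω, 0 < w x) ∧
    IsViscSupersol (Pminus k) Ω H μ (fun _ => 0) w}

open Real

noncomputable def barrierProfile (A c s : ℝ) : ℝ := A / c * (1 - exp (-(c * s)))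

section BarrierProfile

variable {A c : ℝ}

lemma barrierProfile_zero : barrierProfile A c 0 = 0 := by
  simp [barrierProfile]

lemma hasDerivAt_barrierProfile (hc : c ≠ 0) (s : ℝ) :
    HasDerivAt (barrierProfile A c) (A * exp (-(c * s))) s := by
  have hlin : HasDerivAt (fun t => -(c * t)) (-c) s := by
    simpa using ((hasDerivAt_id' s).const_mul c).fun_neg
  exact ((hlin.exp.const_sub 1).const_mul (A / c)).congr_deriv (by field_simp)

lemma barrierProfile_le_mul (hA : 0 ≤ A) (hc : 0 < c) (s : ℝ) :
    barrierProfile A c s ≤ A * s := by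
  have h : 1 - exp (-(c * s)) ≤ c * s := by linarith [add_one_le_exp (-(c * s))]
  calc barrierProfile A c s ≤ A / c * (c * s) := by
        unfold barrierProfile; gcongr
    _ = A * s := by field_simp

lemma mul_le_barrierProfile (hA : 0 ≤ A) (hc : 0 < c) {s D : ℝ} (hs : 0 ≤ s) (hsD : s ≤ D) :
    A * exp (-(c * D)) * s ≤ barrierProfile A c s := by
  have hchord : c * s * exp (-(c * s)) ≤ 1 - exp (-(c * s)) := by
    have h := add_one_le_exp (c * s)
    have h1 : exp (c * s) * exp (-(c * s)) = 1 := by rw [← exp_add]; simp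
    nlinarith [exp_pos (-(c * s))]
  have hexp : exp (-(c * D)) ≤ exp (-(c * s)) := exp_le_exp.2 (by nlinarith)
  calc A * exp (-(c * D)) * s = A / c * (c * s * exp (-(c * D))) := by field_simp
    _ ≤ A / c * (c * s * exp (-(c * s))) := by gcongr
    _ ≤ barrierProfile A c s := by unfold barrierProfile; gcongr

end BarrierProfile

lemma iteratedFDeriv_two_apply_eq_deriv_deriv {𝕜 E F : Type*} [NontriviallyNormedField 𝕜]
    [NormedAddCommGroup E] [NormedSpace 𝕜 E] [NormedAddCommGroup F] [NormedSpace 𝕜 F]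
    {f : E → F} {x : E} (hf : ContDiffAt 𝕜 2 f x) (v : E) :
    iteratedFDeriv 𝕜 2 f x ![v, v] = deriv (deriv fun t : 𝕜 => f (x + t • v)) 0 := by
  have hline : ∀ t : 𝕜, HasDerivAt (fun s : 𝕜 => x + s • v) v t := fun t => by
    simpa using ((hasDerivAt_id t).smul_const v).const_add x
  have hdiff : ∀ᶠ t in 𝓝 (0 : 𝕜), DifferentiableAt 𝕜 f (x + t • v) := by
    have hcont : Tendsto (fun t : 𝕜 => x + t • v) (𝓝 0) (𝓝 x) := by
      simpa using (hline 0).continuousAt.tendsto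
    exact hcont.eventually <| (hf.eventually (by simp)).mono fun z hz =>
      hz.differentiableAt (by norm_num)
  have hderiv : deriv (fun t : 𝕜 => f (x + t • v)) =ᶠ[𝓝 0] fun t => fderiv 𝕜 f (x + t • v) v :=
    hdiff.mono fun t ht => ((ht.hasFDerivAt.comp_hasDerivAt t (hline t)).deriv)
  have hf' : DifferentiableAt 𝕜 (fderiv 𝕜 f) x :=
    (hf.fderiv_right (m := 1) (by norm_num)).differentiableAt (by norm_num)
  have hsecond : HasDerivAt (fun t : 𝕜 => fderiv 𝕜 f (x + t • v) v)
      (fderiv 𝕜 (fderiv 𝕜 f) x v v) 0 := by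
    have hf'' : HasFDerivAt (fderiv 𝕜 f) (fderiv 𝕜 (fderiv 𝕜 f) x) (x + (0 : 𝕜) • v) := by
      simpa using hf'.hasFDerivAt
    simpa [Function.comp_def] using (ContinuousLinearMap.apply 𝕜 F v).hasFDerivAt.comp_hasDerivAt 0
      (hf''.comp_hasDerivAt 0 (hline 0))
  rw [iteratedFDeriv_two_apply, hderiv.deriv_eq, hsecond.deriv]
  rfl

section RadialBarrier

variable {E : Type*} [NormedAddCommGroup E] [InnerProductSpace ℝ E] {A c : ℝ} {x y : E}

noncomputable def radialBarrier (A c : ℝ) (y z : E) : ℝ := barrierProfile A c ‖z - y‖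

lemma contDiffAt_radialBarrier (hxy : x ≠ y) : ContDiffAt ℝ 2 (radialBarrier A c y) x := by
  have hP : ContDiff ℝ 2 (barrierProfile A c) := by unfold barrierProfile; fun_prop
  exact hP.contDiffAt.comp x
    ((contDiffAt_norm ℝ (sub_ne_zero.2 hxy)).comp x (contDiffAt_id.sub contDiffAt_const))

lemma norm_fderiv_radialBarrier_le (hA : 0 ≤ A) (hc : c ≠ 0) (hxy : x ≠ y) :
    ‖fderiv ℝ (radialBarrier A c y) x‖ ≤ A * exp (-(c * ‖x - y‖)) := by
  have hdist : DifferentiableAt ℝ (fun z => ‖z - y‖) x :=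
    (differentiableAt_id.sub_const y).norm ℝ (sub_ne_zero.2 hxy)
  have hdist_le : ‖fderiv ℝ (fun z => ‖z - y‖) x‖ ≤ 1 := by
    simpa [← dist_eq_norm] using
      norm_fderiv_le_of_lipschitz ℝ (LipschitzWith.dist_left y) (x₀ := x)
  have hφ := (hasDerivAt_barrierProfile (A := A) hc ‖x - y‖).comp_hasFDerivAt x hdist.hasFDerivAt
  rw [show radialBarrier A c y = barrierProfile A c ∘ fun z => ‖z - y‖ from rfl, hφ.fderiv,
    norm_smul, Real.norm_of_nonneg (by positivity)]
  exact mul_le_of_le_one_right (by positivity) hdist_le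

lemma iteratedFDeriv_radialBarrier_radial (hc : c ≠ 0) (hxy : x ≠ y) :
    iteratedFDeriv ℝ 2 (radialBarrier A c y) x
      ![‖x - y‖⁻¹ • (x - y), ‖x - y‖⁻¹ • (x - y)] = -(c * (A * exp (-(c * ‖x - y‖)))) := by
  set r := ‖x - y‖
  have hr : 0 < r := norm_pos_iff.2 (sub_ne_zero.2 hxy)
  rw [iteratedFDeriv_two_apply_eq_deriv_deriv (contDiffAt_radialBarrier hxy)]
  have hray : (fun t : ℝ => radialBarrier A c y (x + t • r⁻¹ • (x - y))) =ᶠ[𝓝 0]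
      fun t => barrierProfile A c (r + t) := by
    filter_upwards [Ioi_mem_nhds (neg_lt_zero.2 hr)] with t ht
    have hvec : x + t • r⁻¹ • (x - y) - y = ((r + t) / r) • (x - y) := by
      rw [smul_smul, add_div, div_self hr.ne', add_smul, one_smul, div_eq_mul_inv]; abel
    have hrt : 0 ≤ (r + t) / r := div_nonneg (by linarith [mem_Ioi.1 ht]) hr.le
    rw [radialBarrier, hvec, norm_smul, Real.norm_of_nonneg hrt, div_mul_cancel₀ _ hr.ne']
  have hfirst : deriv (fun t => barrierProfile A c (r + t)) = fun t => A * exp (-(c * (r + t))) :=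
    funext fun t => ((hasDerivAt_barrierProfile hc (r + t)).comp_const_add r t).deriv
  have hsecond :
      HasDerivAt (fun t => A * exp (-(c * (r + t)))) (-(c * (A * exp (-(c * r))))) 0 := by
    have hlin : HasDerivAt (fun t => -(c * (r + t))) (-c) 0 := by
      simpa using (((hasDerivAt_id' (0 : ℝ)).const_add r).const_mul c).fun_neg
    exact (hlin.exp.const_mul A).congr_deriv (by simp only [add_zero, mul_neg, neg_inj]; ring)
  rw [hray.deriv.deriv_eq, hfirst, hsecond.deriv]

end RadialBarrier

lemma Pminus_one_le_iteratedFDeriv {N : ℕ} (φ : EuclideanSpace ℝ (Fin N) → ℝ)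
    (x e : EuclideanSpace ℝ (Fin N)) (he : ‖e‖ = 1) :
    Pminus 1 φ x ≤ iteratedFDeriv ℝ 2 φ x ![e, e] := by
  refine csInf_le ⟨-‖iteratedFDeriv ℝ 2 φ x‖, ?_⟩ ⟨fun _ => e, ?_, by simp⟩
  · rintro s ⟨ξ, hξ, rfl⟩
    have h := (iteratedFDeriv ℝ 2 φ x).le_opNorm ![ξ 0, ξ 0]
    simp only [Fin.prod_univ_two, Matrix.cons_val_zero, Matrix.cons_val_one, hξ.1 0, mul_one,
      Real.norm_eq_abs] at h
    simpa using (abs_le.1 h).1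
  · exact ⟨fun _ => he, fun i j hij => absurd (Subsingleton.elim i j) hij⟩

lemma Pminus_one_radialBarrier_add_le {N : ℕ} {A b c : ℝ} {x y : EuclideanSpace ℝ (Fin N)}
    (hA : 0 ≤ A) (hb : 0 ≤ b) (hc : c ≠ 0) (hxy : x ≠ y) :
    Pminus 1 (radialBarrier A c y) x + b * ‖gradient (radialBarrier A c y) x‖ ≤
      (b - c) * (A * exp (-(c * ‖x - y‖))) := by
  have he : ‖‖x - y‖⁻¹ • (x - y)‖ = 1 := norm_smul_inv_norm (sub_ne_zero.2 hxy)
  have hhess := Pminus_one_le_iteratedFDeriv (radialBarrier A c y) x _ he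
  rw [iteratedFDeriv_radialBarrier_radial hc hxy] at hhess
  have hgrad : ‖gradient (radialBarrier A c y) x‖ ≤ A * exp (-(c * ‖x - y‖)) := by
    rw [gradient, LinearIsometryEquiv.norm_map]
    exact norm_fderiv_radialBarrier_le hA hc hxy
  nlinarith [mul_le_mul_of_nonneg_left hgrad hb]

section Comparison

variable {N : ℕ} {Ω : Set (EuclideanSpace ℝ (Fin N))}
  {H : EuclideanSpace ℝ (Fin N) → EuclideanSpace ℝ (Fin N) → ℝ} {b : ℝ}
  {f u : EuclideanSpace ℝ (Fin N) → ℝ} {A : ℝ} {x y : EuclideanSpace ℝ (Fin N)}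

lemma not_isLocalMaxOn_sub_radialBarrier (hb : 0 ≤ b) (hSC1 : SC1 Ω H b)
    (hsub : IsViscSubsol (Pminus 1) Ω H 0 f u) (hA : 0 ≤ A) (hx : x ∈ Ω) (hxy : x ≠ y)
    (hfx : -(A * exp (-((b + 1) * ‖x - y‖))) < f x) :
    ¬ IsLocalMaxOn (fun z => u z - radialBarrier A (b + 1) y z) Ω x := by
  intro hmax
  have hf := hsub x hx _ (contDiffAt_radialBarrier hxy) hmax
  have hP := Pminus_one_radialBarrier_add_le hA hb (by positivity : b + 1 ≠ 0) hxy
  have hH := (le_abs_self _).trans (hSC1 x hx (gradient (radialBarrier A (b + 1) y) x))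
  rw [zero_mul, add_zero] at hf
  linarith

lemma sub_le_mul_norm_of_isViscSubsol (hΩopen : IsOpen Ω) (hΩbdd : Bornology.IsBounded Ω)
    (hb : 0 ≤ b) (hSC1 : SC1 Ω H b) {M : ℝ} (hfM : ∀ z ∈ Ω, -M ≤ f z)
    (husc : UpperSemicontinuousOn u (closure Ω)) (hbdry : ∀ z ∈ frontier Ω, u z = 0)
    {C₀ : ℝ} (hC₀ : 0 ≤ C₀) (hlow : ∀ z ∈ closure Ω, -u z ≤ C₀ * infDist z (frontier Ω))
    (hsub : IsViscSubsol (Pminus 1) Ω H 0 f u)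
    (hMA : M < A * exp (-((b + 1) * diam (closure Ω))))
    (hC₀A : C₀ ≤ A * exp (-((b + 1) * diam (closure Ω))))
    (hx : x ∈ closure Ω) (hy : y ∈ closure Ω) :
    u x - u y ≤ A * ‖x - y‖ := by
  set c := b + 1
  set κ := exp (-(c * diam (closure Ω)))
  set φ := radialBarrier A c y
  have hc : 0 < c := by positivity
  have hA : 0 ≤ A := nonneg_of_mul_nonneg_left (hC₀.trans hC₀A) (exp_pos _)
  have hdiam : ∀ z ∈ closure Ω, ‖z - y‖ ≤ diam (closure Ω) := fun z hz => by
    rw [← dist_eq_norm]; exact dist_le_diam_of_mem hΩbdd.closure hz hy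
  have hφ : Continuous φ := by unfold φ radialBarrier barrierProfile; fun_prop
  obtain ⟨z, hz, hzmax⟩ := (husc.add hφ.neg.continuousOn.upperSemicontinuousOn).exists_isMaxOn
    ⟨y, hy⟩ hΩbdd.isCompact_closure
  have hmax : ∀ w ∈ closure Ω, u w - φ w ≤ u z - φ z := fun w hw => by
    simpa [sub_eq_add_neg] using hzmax hw
  have hzy : u z - φ z ≤ u y := by
    by_cases hzΩ : z ∈ Ω
    · by_cases hzy : z = y
      · simp [hzy, φ, radialBarrier, barrierProfile_zero]
      · have hlocal : IsLocalMaxOn (fun w => u w - φ w) Ω z :=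
          IsMaxOn.localize fun w hw => hmax w (subset_closure hw)
        refine absurd hlocal (not_isLocalMaxOn_sub_radialBarrier hb hSC1 hsub hA hzΩ hzy ?_)
        have hκ : κ ≤ exp (-(c * ‖z - y‖)) := exp_le_exp.2 (by nlinarith [hdiam z hz])
        nlinarith [hfM z hzΩ]
    · have hz' : z ∈ frontier Ω := hΩopen.frontier_eq ▸ ⟨hz, hzΩ⟩
      have hyz : infDist y (frontier Ω) ≤ ‖z - y‖ := by
        rw [← dist_eq_norm, dist_comm]; exact infDist_le_dist_of_mem hz'
      have hφz : A * κ * ‖z - y‖ ≤ φ z :=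
        mul_le_barrierProfile hA hc (norm_nonneg (z - y)) (hdiam z hz)
      rw [hbdry z hz']
      nlinarith [hlow y hy, mul_le_mul_of_nonneg_left hyz hC₀, norm_nonneg (z - y)]
  calc u x - u y ≤ φ x := by linarith [hmax x hx]
    _ ≤ A * ‖x - y‖ := barrierProfile_le_mul hA hc _

end Comparison

theorem statement7_general {N : ℕ}
    (Ω : Set (EuclideanSpace ℝ (Fin N))) (hΩopen : IsOpen Ω)
    (hΩbdd : Bornology.IsBounded Ω)
    (H : EuclideanSpace ℝ (Fin N) → EuclideanSpace ℝ (Fin N) → ℝ) (b : ℝ) (hb : 0 ≤ b)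
    (hSC1 : SC1 Ω H b)
    (f : EuclideanSpace ℝ (Fin N) → ℝ)
    (hfb : ∃ M : ℝ, ∀ x ∈ Ω, |f x| ≤ M)
    (u : EuclideanSpace ℝ (Fin N) → ℝ)
    (husc : UpperSemicontinuousOn u (closure Ω))
    (hbdry : ∀ x ∈ frontier Ω, u x = 0)
    (C₀ : ℝ) (hC₀ : 0 < C₀)
    (hlow : ∀ x ∈ closure Ω, -u x ≤ C₀ * infDist x (frontier Ω))
    (hsub : IsViscSubsol (Pminus 1) Ω H 0 f u) :
    ∃ L : NNReal, LipschitzOnWith L u (closure Ω) := by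
  obtain ⟨M, hM⟩ := hfb
  set κ := exp (-((b + 1) * diam (closure Ω)))
  set A := (|M| + C₀) / κ
  have hAκ : A * κ = |M| + C₀ := div_mul_cancel₀ _ (exp_pos _).ne'
  refine ⟨A.toNNReal, LipschitzOnWith.of_le_add_mul' A fun x hx y hy => ?_⟩
  have h := sub_le_mul_norm_of_isViscSubsol (A := A) hΩopen hΩbdd hb hSC1
    (fun z hz => (abs_le.1 (hM z hz)).1) husc hbdry hC₀.le hlow hsub
    (by linarith [le_abs_self M]) (by linarith [abs_nonneg M]) hx hy
  rw [dist_eq_norm]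
  linarith

/-- global Lipschitz regularity for bounded subsolutions of
`𝒫⁻₁(D²u) + H(x,∇u) = f` vanishing on `∂Ω` and satisfying `-u ≤ C₀ d`. -/
theorem statement7 {N : ℕ} (hN : 2 ≤ N)
    (Ω : Set (EuclideanSpace ℝ (Fin N))) (hΩopen : IsOpen Ω)
    (hΩbdd : Bornology.IsBounded Ω)
    (H : EuclideanSpace ℝ (Fin N) → EuclideanSpace ℝ (Fin N) → ℝ) (b : ℝ) (hb : 0 ≤ b)
    (hHcont : ContinuousOn (Function.uncurry H)
      (Ω ×ˢ (univ : Set (EuclideanSpace ℝ (Fin N)))))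
    (hSC1 : SC1 Ω H b)
    (f : EuclideanSpace ℝ (Fin N) → ℝ)
    (hfc : ContinuousOn f Ω) (hfb : ∃ M : ℝ, ∀ x ∈ Ω, |f x| ≤ M)
    (u : EuclideanSpace ℝ (Fin N) → ℝ)
    (hubdd : ∃ M : ℝ, ∀ x ∈ closure Ω, |u x| ≤ M)
    (husc : UpperSemicontinuousOn u (closure Ω))
    (hbdry : ∀ x ∈ frontier Ω, u x = 0)
    (C₀ : ℝ) (hC₀ : 0 < C₀)
    (hlow : ∀ x ∈ closure Ω, -u x ≤ C₀ * infDist x (frontier Ω))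
    (hsub : IsViscSubsol (Pminus 1) Ω H 0 f u) :
    ∃ L : NNReal, LipschitzOnWith L u (closure Ω) :=
  statement7_general Ω hΩopen hΩbdd H b hb hSC1 f hfb u husc hbdry C₀ hC₀ hlow hsub
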